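/- Let $v_2$ be an integer with $v_2 > 18$ and $3 \nmid v_2$, let $a_j \in \mathbb{C}$ for integers $j$ with $-\lfloor v_2/3 \rfloor - 3 \le j \le -4$, and define $\varphi_1 = T^6$ and $\varphi_2 = T^9 + T^{v_2 - 9} + \sum_{j = -\lfloor v_2/3 \rfloor - 3}^{-4} a_j T^{2 v_2 + 3j}$ in $\mathbb{C}[[T]]$. Let $\Lambda$ be the value set of differentials of $(\varphi_1, \varphi_2)$. Then the set $\Lambda \setminus \langle 6, 9, v_2 \rangle$ has at least $5$ elements. -/

import Mathlib

/-!
For `φ₁ = T⁶` every differential used below is, up to a constant, `T⁵` times an image of the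
operator `E_α f = α f - T f'` (`eulerOp α`), which multiplies the coefficient of `Tⁿ` by `α - n`:
it kills `T^α` and keeps every other leading term. Write `φ₂ = T⁹ + ψ` with
`ψ = T^(v-9) + (order ≥ v-8)`. Then `3 φ₂ dφ₁ - 2 φ₁ dφ₂ = 2 T⁵ E₉ φ₂` has value `v - 3`, and for
`G = φ₂³ - 3 φ₁³ φ₂ = -2 T²⁷ + 3 T^(2v-9) + ⋯` the differential `2 T⁵ E₂₇ G` has value `2v - 3`;
multiplying by `φ₁` adds `6` to both. A fifth value `≡ 2v (mod 3)` below `2v` comes from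
`R = φ₂² - T¹⁸ - 2 T^v`: if `ord R < 2v - 17` then `ord R ≡ 2v (mod 3)`, because the tail of `φ₂`
only has exponents `2v + 3j`, and `6 T⁵ E_v R` has value `ord R + 6`; otherwise the tail starts
with `-½ T^(2v-27)`, and `27 φ₁² φ₂ dφ₁ + ((v-18) φ₂² - v φ₁³) dφ₂` has value `2v - 9`.
A value `≡ k v (mod 3)`, `k ∈ {1, 2}`, that is below `k v` or equals `k v + 3` is not in
`⟨6, 9, v⟩`.
-/

open PowerSeries

/-- Substitution of two one-variable power series (with zero constant term) into a
two-variable power series, defined coefficientwise. -/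
noncomputable def sub2 (φ₁ φ₂ : PowerSeries ℂ) (h : MvPowerSeries (Fin 2) ℂ) :
    PowerSeries ℂ :=
  PowerSeries.mk fun n =>
    ∑ p ∈ Finset.range (n + 1) ×ˢ Finset.range (n + 1),
      MvPowerSeries.coeff (Finsupp.single 0 p.1 + Finsupp.single 1 p.2) h *
        PowerSeries.coeff n (φ₁ ^ p.1 * φ₂ ^ p.2)

/-- The value semigroup of a parameterization `(φ₁, φ₂)`. -/
noncomputable def valueSemigroup (φ₁ φ₂ : PowerSeries ℂ) : Set ℕ :=
  {n : ℕ | ∃ h : MvPowerSeries (Fin 2) ℂ,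
    sub2 φ₁ φ₂ h ≠ 0 ∧ (sub2 φ₁ φ₂ h).order = (n : ℕ∞)}

/-- The value set of differentials of a parameterization `(φ₁, φ₂)`. -/
noncomputable def diffValues (φ₁ φ₂ : PowerSeries ℂ) : Set ℕ :=
  {n : ℕ | ∃ A B : MvPowerSeries (Fin 2) ℂ,
    sub2 φ₁ φ₂ A * derivativeFun φ₁ + sub2 φ₁ φ₂ B * derivativeFun φ₂ ≠ 0 ∧
    (sub2 φ₁ φ₂ A * derivativeFun φ₁ + sub2 φ₁ φ₂ B * derivativeFun φ₂).order + 1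
      = (n : ℕ∞)}

noncomputable def eulerOp (α : ℂ) (f : ℂ⟦X⟧) : ℂ⟦X⟧ := C α * f - X * d⁄dX ℂ f

theorem coeff_eulerOp (α : ℂ) (f : ℂ⟦X⟧) (n : ℕ) :
    coeff n (eulerOp α f) = (α - n) * coeff n f := by
  rcases n with _ | n
  · simp [eulerOp]
  · simp only [eulerOp, map_sub, coeff_C_mul, coeff_succ_X_mul, coeff_derivative]
    push_cast
    ring

theorem eulerOp_add (α : ℂ) (f g : ℂ⟦X⟧) :
    eulerOp α (f + g) = eulerOp α f + eulerOp α g := by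
  simp only [eulerOp, map_add]
  ring

theorem eulerOp_C_mul_X_pow (α c : ℂ) (n : ℕ) :
    eulerOp α (C c * X ^ n) = C ((α - n) * c) * X ^ n := by
  ext m
  rw [coeff_eulerOp, coeff_C_mul_X_pow, coeff_C_mul_X_pow]
  split_ifs with h <;> simp [h]

theorem X_pow_dvd_eulerOp {n : ℕ} {f : ℂ⟦X⟧} (α : ℂ) (h : X ^ n ∣ f) :
    X ^ n ∣ eulerOp α f := by
  rw [X_pow_dvd_iff] at h ⊢
  intro m hm
  rw [coeff_eulerOp, h m hm, mul_zero]

theorem order_eulerOp {f : ℂ⟦X⟧} {n : ℕ} {α : ℂ} (hf : f.order = n) (hα : α ≠ n) :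
    (eulerOp α f).order = n := by
  rw [order_eq_nat] at hf ⊢
  refine ⟨?_, fun i hi => ?_⟩
  · rw [coeff_eulerOp]
    exact mul_ne_zero (sub_ne_zero.mpr hα) hf.1
  · rw [coeff_eulerOp, hf.2 i hi, mul_zero]

theorem order_C_mul_X_pow_add_X_pow_mul {c : ℂ} (hc : c ≠ 0) (n : ℕ) (g : ℂ⟦X⟧) :
    (C c * X ^ n + X ^ (n + 1) * g).order = (n : ℕ∞) := by
  rw [order_eq_nat]
  refine ⟨?_, fun i hi => ?_⟩
  · simp [coeff_X_pow_mul', hc]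
  · simp [coeff_X_pow_mul', hi.ne, show ¬ n + 1 ≤ i by omega]

theorem order_C_mul_X_pow_mul {c : ℂ} (hc : c ≠ 0) (k : ℕ) (f : ℂ⟦X⟧) :
    (C c * X ^ k * f).order = k + f.order := by
  have hC : (C c).order = 0 := by simpa using order_monomial_of_ne_zero 0 c hc
  rw [order_mul, order_mul, order_X_pow, hC, zero_add]

theorem order_eulerOp_C_mul_X_pow_add {α n : ℕ} (hn : α ≠ n) (c : ℂ) {d : ℂ} (hd : d ≠ 0)
    (g : ℂ⟦X⟧) : (eulerOp α (C c * X ^ α + (C d * X ^ n + X ^ (n + 1) * g))).order = n := by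
  rw [eulerOp_add, eulerOp_C_mul_X_pow, sub_self, zero_mul, map_zero, zero_mul, zero_add]
  exact order_eulerOp (order_C_mul_X_pow_add_X_pow_mul hd n g) (by exact_mod_cast hn)

theorem X_pow_dvd_derivative {n : ℕ} {f : ℂ⟦X⟧} (h : X ^ (n + 1) ∣ f) : X ^ n ∣ d⁄dX ℂ f := by
  rw [X_pow_dvd_iff] at h ⊢
  intro m hm
  rw [coeff_derivative, h (m + 1) (by omega), zero_mul]

theorem coeff_pow_mul_pow_eq_zero {φ₁ φ₂ : ℂ⟦X⟧} (h₁ : constantCoeff φ₁ = 0)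
    (h₂ : constantCoeff φ₂ = 0) {n p q : ℕ} (h : n < p ∨ n < q) :
    coeff n (φ₁ ^ p * φ₂ ^ q) = 0 := by
  apply coeff_of_lt_order
  calc (n : ℕ∞) < p + q := by exact_mod_cast (by omega : n < p + q)
    _ ≤ (φ₁ ^ p).order + (φ₂ ^ q).order :=
      add_le_add (le_order_pow_of_constantCoeff_eq_zero p h₁)
        (le_order_pow_of_constantCoeff_eq_zero q h₂)
    _ ≤ _ := le_order_mul _ _

theorem sub2_add (φ₁ φ₂ : ℂ⟦X⟧) (g h : MvPowerSeries (Fin 2) ℂ) :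
    sub2 φ₁ φ₂ (g + h) = sub2 φ₁ φ₂ g + sub2 φ₁ φ₂ h := by
  ext n
  simp only [sub2, coeff_mk, map_add, add_mul, Finset.sum_add_distrib]

theorem single_zero_add_single_one_eq_iff (d : Fin 2 →₀ ℕ) (p q : ℕ) :
    Finsupp.single 0 p + Finsupp.single 1 q = d ↔ (p, q) = (d 0, d 1) := by
  constructor
  · rintro rfl
    simp
  · intro h
    simp only [Prod.mk.injEq] at h
    ext i
    fin_cases i <;> simp [h]

theorem sub2_monomial {φ₁ φ₂ : ℂ⟦X⟧} (h₁ : constantCoeff φ₁ = 0)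
    (h₂ : constantCoeff φ₂ = 0) (d : Fin 2 →₀ ℕ) (r : ℂ) :
    sub2 φ₁ φ₂ (MvPowerSeries.monomial d r) = C r * (φ₁ ^ d 0 * φ₂ ^ d 1) := by
  ext n
  simp only [sub2, coeff_mk, MvPowerSeries.coeff_monomial, single_zero_add_single_one_eq_iff,
    ite_mul, zero_mul, coeff_C_mul]
  rw [Finset.sum_ite_eq' (Finset.range (n + 1) ×ˢ Finset.range (n + 1)) (d 0, d 1)]
  split_ifs with hd
  · rfl
  · simp only [Finset.mem_product, Finset.mem_range, not_and_or, not_lt] at hd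
    rw [coeff_pow_mul_pow_eq_zero h₁ h₂ (by omega), mul_zero]

theorem sub2_coe {φ₁ φ₂ : ℂ⟦X⟧} (h₁ : constantCoeff φ₁ = 0) (h₂ : constantCoeff φ₂ = 0)
    (P : MvPolynomial (Fin 2) ℂ) : sub2 φ₁ φ₂ P = MvPolynomial.aeval ![φ₁, φ₂] P := by
  induction P using MvPolynomial.induction_on' with
  | monomial d r =>
    rw [MvPolynomial.coe_monomial, sub2_monomial h₁ h₂, MvPolynomial.aeval_monomial,
      Finsupp.prod_fintype _ _ (by simp), Fin.prod_univ_two]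
    rfl
  | add P Q hP hQ => rw [MvPolynomial.coe_add, sub2_add, hP, hQ, map_add]

noncomputable def polyDiff (φ₁ φ₂ : ℂ⟦X⟧) (P Q : MvPolynomial (Fin 2) ℂ) : ℂ⟦X⟧ :=
  MvPolynomial.aeval ![φ₁, φ₂] P * d⁄dX ℂ φ₁ + MvPolynomial.aeval ![φ₁, φ₂] Q * d⁄dX ℂ φ₂

theorem polyDiff_X_zero_mul (φ₁ φ₂ : ℂ⟦X⟧) (P Q : MvPolynomial (Fin 2) ℂ) :
    polyDiff φ₁ φ₂ (.X 0 * P) (.X 0 * Q) = φ₁ * polyDiff φ₁ φ₂ P Q := by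
  simp only [polyDiff, map_mul, MvPolynomial.aeval_X, Matrix.cons_val_zero]
  ring

theorem add_one_mem_diffValues {φ₁ φ₂ : ℂ⟦X⟧} (h₁ : constantCoeff φ₁ = 0)
    (h₂ : constantCoeff φ₂ = 0) {P Q : MvPolynomial (Fin 2) ℂ} {k : ℕ}
    (h : (polyDiff φ₁ φ₂ P Q).order = k) : k + 1 ∈ diffValues φ₁ φ₂ := by
  refine ⟨P, Q, ?_, ?_⟩ <;> rw [sub2_coe h₁ h₂, sub2_coe h₁ h₂]
  · intro h0
    rw [show polyDiff φ₁ φ₂ P Q = 0 from h0, order_zero] at h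
    exact ENat.top_ne_natCast k h
  · exact congrArg (· + 1) h

theorem exists_eq_of_mem_closure_six_nine {v m : ℕ}
    (h : m ∈ AddSubmonoid.closure ({6, 9, v} : Set ℕ)) :
    ∃ x y z : ℕ, m = 6 * x + 9 * y + v * z := by
  induction h using AddSubmonoid.closure_induction with
  | mem n hn =>
    rcases hn with rfl | rfl | rfl
    · exact ⟨1, 0, 0, rfl⟩
    · exact ⟨0, 1, 0, rfl⟩
    · exact ⟨0, 0, 1, by ring⟩
  | zero => exact ⟨0, 0, 0, rfl⟩
  | add _ _ _ _ hx hy =>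
    obtain ⟨x₁, y₁, z₁, rfl⟩ := hx
    obtain ⟨x₂, y₂, z₂, rfl⟩ := hy
    exact ⟨x₁ + x₂, y₁ + y₂, z₁ + z₂, by ring⟩

theorem notMem_closure_six_nine_of_mod_three {v m k : ℕ} (hv : 1 < v) (h3 : ¬ 3 ∣ v)
    (hk : k = 1 ∨ k = 2) (hm : m % 3 = k * v % 3) (hlt : m < k * v ∨ m = k * v + 3) :
    m ∉ AddSubmonoid.closure ({6, 9, v} : Set ℕ) := by
  intro hmem
  obtain ⟨x, y, z, rfl⟩ := exists_eq_of_mem_closure_six_nine hmem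
  rcases lt_or_ge z (k + 3) with hz | hz
  · rcases hk with rfl | rfl <;> interval_cases z <;> omega
  · have := Nat.mul_le_mul_left v hz
    rcases hk with rfl | rfl <;> omega

noncomputable def normalFormTail (v : ℕ) (a : ℤ → ℂ) : ℂ⟦X⟧ :=
  ∑ j ∈ Finset.Icc (-((v / 3 : ℕ) : ℤ) - 3) (-4), C (a j) * X ^ (2 * (v : ℤ) + 3 * j).toNat

theorem X_pow_dvd_normalFormTail {v : ℕ} (h3 : ¬ 3 ∣ v) (a : ℤ → ℂ) :
    X ^ (v - 8) ∣ normalFormTail v a := by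
  refine Finset.dvd_sum fun j hj => Dvd.dvd.mul_left (pow_dvd_pow X ?_) _
  rw [Finset.mem_Icc] at hj
  omega

theorem coeff_normalFormTail_eq_zero {v n : ℕ} (hv : 9 ≤ v) (a : ℤ → ℂ) (hn : n % 3 ≠ 2 * v % 3) :
    coeff n (normalFormTail v a) = 0 := by
  refine (map_sum _ _ _).trans (Finset.sum_eq_zero fun j hj => ?_)
  rw [Finset.mem_Icc] at hj
  have : 0 ≤ 2 * (v : ℤ) + 3 * j := by omega
  rw [coeff_C_mul_X_pow, if_neg (by omega)]

section NormalForm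

-- `u` stands for `v₂ - 19`, so that no exponent below involves truncated subtraction.
variable {u : ℕ} {φ S : ℂ⟦X⟧}

theorem constantCoeff_eq_zero_of_eq (hφ : φ = X ^ 9 + X ^ (u + 10) + S)
    (hS : X ^ (u + 11) ∣ S) : constantCoeff φ = 0 := by
  rw [← X_dvd_iff, hφ]
  exact dvd_add (dvd_add (dvd_pow_self X (by norm_num)) (dvd_pow_self X (by omega)))
    ((dvd_pow_self X (by omega)).trans hS)

theorem order_polyDiff_X_pow_six_X_zero_mul {P Q : MvPolynomial (Fin 2) ℂ} {k : ℕ}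
    (h : (polyDiff (X ^ 6) φ P Q).order = k) :
    (polyDiff (X ^ 6) φ (.X 0 * P) (.X 0 * Q)).order = (k + 6 : ℕ) := by
  rw [polyDiff_X_zero_mul, order_mul, order_X_pow, h]
  push_cast
  ring

theorem order_polyDiff_eulerOp_nine (hφ : φ = X ^ 9 + X ^ (u + 10) + S)
    (hS : X ^ (u + 11) ∣ S) :
    (polyDiff (X ^ 6) φ (3 * .X 1) (-2 * .X 0)).order = (u + 15 : ℕ) := by
  have hω : polyDiff (X ^ 6) φ (3 * .X 1) (-2 * .X 0) = C 2 * X ^ 5 * eulerOp (9 : ℕ) φ := by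
    simp only [polyDiff, eulerOp, Nat.succ_eq_add_one, Nat.reduceAdd, Fin.isValue, map_mul,
      map_ofNat, MvPolynomial.aeval_X, Matrix.cons_val_one, Matrix.cons_val_fin_one,
      Derivation.leibniz_pow, Nat.add_one_sub_one, derivative_X, smul_eq_mul, mul_one, nsmul_eq_mul,
      Nat.cast_ofNat, neg_mul, map_neg, Matrix.cons_val_zero]
    ring
  obtain ⟨s, rfl⟩ := hS
  have hφ' : φ = C 1 * X ^ 9 + (C 1 * X ^ (u + 10) + X ^ (u + 10 + 1) * s) := by
    rw [hφ, map_one]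
    ring
  rw [hω, hφ', order_C_mul_X_pow_mul two_ne_zero,
    order_eulerOp_C_mul_X_pow_add (by omega) 1 one_ne_zero]
  push_cast
  ring

theorem order_polyDiff_eulerOp_twentySeven (hφ : φ = X ^ 9 + X ^ (u + 10) + S)
    (hS : X ^ (u + 11) ∣ S) :
    (polyDiff (X ^ 6) φ (9 * .X 1 ^ 3 - 9 * .X 0 ^ 3 * .X 1)
      (6 * .X 0 ^ 4 - 6 * .X 0 * .X 1 ^ 2)).order = (2 * u + 34 : ℕ) := by
  have hω : polyDiff (X ^ 6) φ (9 * .X 1 ^ 3 - 9 * .X 0 ^ 3 * .X 1)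
      (6 * .X 0 ^ 4 - 6 * .X 0 * .X 1 ^ 2) =
        C 2 * X ^ 5 * eulerOp (27 : ℕ) (φ ^ 3 - C 3 * X ^ 18 * φ) := by
    simp only [polyDiff, eulerOp, Nat.succ_eq_add_one, Nat.reduceAdd, Fin.isValue, map_sub, map_mul,
      MvPolynomial.aeval_ofNat, map_pow, MvPolynomial.aeval_X, Matrix.cons_val_one,
      Matrix.cons_val_fin_one, Matrix.cons_val_zero, Derivation.leibniz_pow, Nat.add_one_sub_one,
      derivative_X, smul_eq_mul, mul_one, nsmul_eq_mul, Nat.cast_ofNat, Derivation.leibniz,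
      derivative_C, mul_zero, add_zero]
    simp only [map_ofNat]
    ring
  obtain ⟨s, rfl⟩ := hS
  have hG : φ ^ 3 - C 3 * X ^ 18 * φ = C (-2) * X ^ 27 + (C 3 * X ^ (2 * u + 29) +
      X ^ (2 * u + 29 + 1) * (3 * (2 * s + X * s ^ 2) + X ^ u * (1 + X * s) ^ 3)) := by
    rw [hφ, map_neg, map_ofNat, map_ofNat]
    ring
  rw [hω, hG, order_C_mul_X_pow_mul two_ne_zero,
    order_eulerOp_C_mul_X_pow_add (by omega) (-2) three_ne_zero]
  push_cast
  ring

theorem order_polyDiff_eulerOp_sq_sub {m : ℕ}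
    (hR : (φ ^ 2 - X ^ 18 - C 2 * X ^ (u + 19)).order = (m : ℕ∞)) (hm : (u + 19 : ℕ) ≠ (m : ℂ)) :
    (polyDiff (X ^ 6) φ ((u + 19 : ℕ) * .X 1 ^ 2 - (u + 1 : ℕ) * .X 0 ^ 3)
      (-12 * .X 0 * .X 1)).order = (m + 5 : ℕ) := by
  have hω : polyDiff (X ^ 6) φ ((u + 19 : ℕ) * .X 1 ^ 2 - (u + 1 : ℕ) * .X 0 ^ 3)
      (-12 * .X 0 * .X 1) =
        C 6 * X ^ 5 * eulerOp (u + 19 : ℕ) (φ ^ 2 - X ^ 18 - C 2 * X ^ (u + 19)) := by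
    simp only [polyDiff, eulerOp, Nat.succ_eq_add_one, Nat.reduceAdd, Nat.cast_add, Nat.cast_ofNat,
      Fin.isValue, Nat.cast_one, map_sub, map_mul, map_add, map_natCast, MvPolynomial.aeval_ofNat,
      map_pow, MvPolynomial.aeval_X, Matrix.cons_val_one, Matrix.cons_val_fin_one, map_one,
      Matrix.cons_val_zero, Derivation.leibniz_pow, Nat.add_one_sub_one, derivative_X, smul_eq_mul,
      mul_one, nsmul_eq_mul, neg_mul, map_neg, pow_one, Derivation.leibniz, derivative_C, mul_zero,
      add_zero]
    simp only [map_ofNat]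
    ring
  rw [hω, order_C_mul_X_pow_mul (by norm_num), order_eulerOp hR hm]
  push_cast
  ring

theorem mod_three_of_order_sq_sub (hφ : φ = X ^ 9 + X ^ (u + 10) + S) (hS : X ^ (u + 11) ∣ S)
    (hS3 : ∀ n, n % 3 ≠ (2 * u + 2) % 3 → coeff n S = 0) {m : ℕ}
    (hR : (φ ^ 2 - X ^ 18 - C 2 * X ^ (u + 19)).order = (m : ℕ∞)) (hm : m < 2 * u + 21) :
    m % 3 = (2 * u + 2) % 3 := by
  obtain ⟨s, hs⟩ := hS
  have hRS : φ ^ 2 - X ^ 18 - C 2 * X ^ (u + 19) =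
      C 2 * (X ^ 9 * S) + X ^ (2 * u + 20) + X ^ (2 * u + 21) * (2 * s + X * s ^ 2) := by
    rw [hφ, map_ofNat]
    linear_combination (S + X ^ (u + 11) * s + 2 * X ^ (u + 10)) * hs
  have hcoeff := (order_eq_nat.mp hR).1
  contrapose! hcoeff
  rw [hRS]
  simp only [map_add, coeff_C_mul, coeff_X_pow_mul', coeff_X_pow,
    if_neg (by omega : ¬ 2 * u + 21 ≤ m), if_neg (by omega : m ≠ 2 * u + 20)]
  split_ifs with h9
  · rw [hS3 _ (by omega)]
    simp
  · simp

theorem C_half_mul_two : C (1 / 2 : ℂ) * 2 = 1 := by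
  rw [← map_ofNat C 2, ← map_mul]
  norm_num

theorem exists_eq_of_X_pow_dvd_sq_sub (hφ : φ = X ^ 9 + X ^ (u + 10) + S)
    (hS : X ^ (u + 11) ∣ S) (hR : X ^ (2 * u + 21) ∣ φ ^ 2 - X ^ 18 - C 2 * X ^ (u + 19)) :
    ∃ t, S = - C (1 / 2) * X ^ (2 * u + 11) + X ^ (2 * u + 12) * t := by
  obtain ⟨s, hs⟩ := hS
  obtain ⟨r, hr⟩ := hR
  have h9 : X ^ 9 * (2 * S + X ^ (2 * u + 11)) =
      X ^ 9 * (X ^ (2 * u + 12) * (r - 2 * s - X * s ^ 2)) := by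
    rw [hφ, map_ofNat] at hr
    linear_combination hr - (S + X ^ (u + 11) * s + 2 * X ^ (u + 10)) * hs
  have h2 := mul_left_cancel₀ (pow_ne_zero 9 X_ne_zero) h9
  exact ⟨C (1 / 2) * (r - 2 * s - X * s ^ 2),
    by linear_combination C (1 / 2) * h2 - S * C_half_mul_two⟩

theorem eulerOp_nine_eq (hφ : φ = X ^ 9 + X ^ (u + 10) + S)
    (hS : S = - C (1 / 2) * X ^ (2 * u + 11) + X ^ (2 * u + 12) * t) :
    ∃ e, eulerOp (9 : ℕ) φ =
      - C (u + 1 : ℂ) * X ^ (u + 10) + C (u + 1 : ℂ) * X ^ (2 * u + 11) +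
        X ^ (2 * u + 12) * e := by
  obtain ⟨e, he⟩ := X_pow_dvd_eulerOp (9 : ℕ) (dvd_mul_right (X ^ (2 * u + 12)) t)
  refine ⟨e, ?_⟩
  rw [hφ, hS, ← one_mul (X ^ 9), ← one_mul (X ^ (u + 10)), ← map_one C, eulerOp_add,
    eulerOp_add, eulerOp_add, eulerOp_C_mul_X_pow, eulerOp_C_mul_X_pow, ← map_neg,
    eulerOp_C_mul_X_pow, he]
  simp only [map_mul, map_neg, map_sub, map_add, map_natCast, map_one]
  push_cast
  linear_combination ((u + 1 : ℂ⟦X⟧) * X ^ (2 * u + 11)) * C_half_mul_two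

theorem order_polyDiff_of_X_pow_dvd_sq_sub (hφ : φ = X ^ 9 + X ^ (u + 10) + S)
    (hS : X ^ (u + 11) ∣ S) (hR : X ^ (2 * u + 21) ∣ φ ^ 2 - X ^ 18 - C 2 * X ^ (u + 19)) :
    (polyDiff (X ^ 6) φ (27 * .X 0 ^ 2 * .X 1)
      ((u + 1 : ℕ) * .X 1 ^ 2 - (u + 19 : ℕ) * .X 0 ^ 3)).order = (2 * u + 28 : ℕ) := by
  have hω : polyDiff (X ^ 6) φ (27 * .X 0 ^ 2 * .X 1)
      ((u + 1 : ℕ) * .X 1 ^ 2 - (u + 19 : ℕ) * .X 0 ^ 3) =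
        18 * X ^ 17 * eulerOp (9 : ℕ) φ
          + 2 * (u + 1 : ℂ⟦X⟧) * X ^ (u + 18) * (9 * φ - eulerOp (9 : ℕ) φ)
          + (u + 1 : ℂ⟦X⟧) * (φ ^ 2 - X ^ 18 - C 2 * X ^ (u + 19)) * d⁄dX ℂ φ := by
    simp only [polyDiff, eulerOp, Nat.succ_eq_add_one, Nat.reduceAdd, Fin.isValue, map_mul,
      MvPolynomial.aeval_ofNat, map_pow, MvPolynomial.aeval_X, Matrix.cons_val_zero,
      Matrix.cons_val_one, Matrix.cons_val_fin_one, Derivation.leibniz_pow, Nat.add_one_sub_one,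
      derivative_X, smul_eq_mul, mul_one, nsmul_eq_mul, Nat.cast_ofNat, Nat.cast_add, Nat.cast_one,
      map_sub, map_add, map_natCast, map_one]
    simp only [map_ofNat]
    ring
  obtain ⟨t, ht⟩ := exists_eq_of_X_pow_dvd_sq_sub hφ hS hR
  obtain ⟨e, he⟩ := eulerOp_nine_eq hφ ht
  obtain ⟨s, hs⟩ := hS
  obtain ⟨r, hr⟩ := hR
  obtain ⟨d, hd⟩ : X ^ 8 ∣ d⁄dX ℂ φ := X_pow_dvd_derivative (by
    rw [hφ, hs]
    exact ⟨1 + X ^ (u + 1) + X ^ (u + 2) * s, by ring⟩)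
  have hc : (2 * (u + 1) * (u + 19) : ℂ) ≠ 0 := by
    exact_mod_cast (by positivity : 2 * (u + 1) * (u + 19) ≠ 0)
  rw [hω, he, hd, hr, hφ, hs, ← order_C_mul_X_pow_add_X_pow_mul hc _
    (18 * e + 2 * ((u : ℂ⟦X⟧) + 1) * (9 * s - ((u : ℂ⟦X⟧) + 1) * X ^ u - X ^ (u + 1) * e)
      + ((u : ℂ⟦X⟧) + 1) * r * d)]
  congr 1
  simp only [map_mul, map_natCast, map_add, map_one, map_ofNat]
  ring

theorem add_one_mem_diffValues_X_pow_six (hφ : φ = X ^ 9 + X ^ (u + 10) + S)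
    (hS : X ^ (u + 11) ∣ S) {P Q : MvPolynomial (Fin 2) ℂ} {k : ℕ}
    (h : (polyDiff (X ^ 6) φ P Q).order = k) : k + 1 ∈ diffValues (X ^ 6) φ :=
  add_one_mem_diffValues (by simp) (constantCoeff_eq_zero_of_eq hφ hS) h

theorem exists_mem_diffValues_mod_three (hφ : φ = X ^ 9 + X ^ (u + 10) + S)
    (hS : X ^ (u + 11) ∣ S) (hS3 : ∀ n, n % 3 ≠ (2 * u + 2) % 3 → coeff n S = 0)
    (h3 : ¬ 3 ∣ u + 19) :
    ∃ n ∈ diffValues (X ^ 6) φ, n % 3 = (2 * u + 2) % 3 ∧ n < 2 * u + 30 := by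
  by_cases hR : X ^ (2 * u + 21) ∣ φ ^ 2 - X ^ 18 - C 2 * X ^ (u + 19)
  · exact ⟨_, add_one_mem_diffValues_X_pow_six hφ hS
      (order_polyDiff_of_X_pow_dvd_sq_sub hφ hS hR), by omega, by omega⟩
  · obtain ⟨i, hi, hci⟩ :
        ∃ i < 2 * u + 21, coeff i (φ ^ 2 - X ^ 18 - C 2 * X ^ (u + 19)) ≠ 0 := by
      simpa [X_pow_dvd_iff] using hR
    have hlt := (order_le i hci).trans_lt (by exact_mod_cast hi : (i : ℕ∞) < (2 * u + 21 : ℕ))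
    obtain ⟨m, hm⟩ := ENat.ne_top_iff_exists.mp hlt.ne_top
    have hmlt : m < 2 * u + 21 := by exact_mod_cast hm ▸ hlt
    have hmod := mod_three_of_order_sq_sub hφ hS hS3 hm.symm hmlt
    have hne : (u + 19 : ℕ) ≠ (m : ℂ) := by exact_mod_cast (by omega : u + 19 ≠ m)
    exact ⟨_, add_one_mem_diffValues_X_pow_six hφ hS
      (order_polyDiff_eulerOp_sq_sub hm.symm hne), by omega, by omega⟩

end NormalForm

/-- For the normal-form parameterization
`(T⁶, T⁹ + T^{v₂-9} + ∑_{j=-⌊v₂/3⌋-3}^{-4} aⱼ T^{2v₂+3j})` with `v₂ > 18`, `3 ∤ v₂`,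
the set `Λ \ ⟨6, 9, v₂⟩` has at least `5` elements. -/
theorem lambda_minus_gamma_6_9_v2_card (v2 : ℕ) (h18 : 18 < v2) (h3 : ¬ (3 ∣ v2))
    (a : ℤ → ℂ) (φ₁ φ₂ : PowerSeries ℂ)
    (hφ₁ : φ₁ = PowerSeries.X ^ 6)
    (hφ₂ : φ₂ = PowerSeries.X ^ 9 + PowerSeries.X ^ (v2 - 9) +
      ∑ j ∈ Finset.Icc (-((v2 / 3 : ℕ) : ℤ) - 3) (-4),
        PowerSeries.C (a j) * PowerSeries.X ^ (2 * (v2 : ℤ) + 3 * j).toNat) :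
    ∃ S : Finset ℕ, 5 ≤ S.card ∧
      ↑S ⊆ diffValues φ₁ φ₂ \ (AddSubmonoid.closure ({6, 9, v2} : Set ℕ) : Set ℕ) := by
  obtain ⟨u, rfl⟩ : ∃ u, v2 = u + 19 := ⟨v2 - 19, by omega⟩
  have hφ : φ₂ = X ^ 9 + X ^ (u + 10) + normalFormTail (u + 19) a := hφ₂
  have hS : X ^ (u + 11) ∣ normalFormTail (u + 19) a := X_pow_dvd_normalFormTail h3 a
  have hS3 (n : ℕ) (hn : n % 3 ≠ (2 * u + 2) % 3) : coeff n (normalFormTail (u + 19) a) = 0 :=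
    coeff_normalFormTail_eq_zero (by omega) a (by omega)
  have hω₁ := order_polyDiff_eulerOp_nine hφ hS
  have hω₂ := order_polyDiff_eulerOp_twentySeven hφ hS
  obtain ⟨n, hn, hn3, hnlt⟩ := exists_mem_diffValues_mod_three hφ hS hS3 h3
  subst hφ₁
  refine ⟨{u + 16, u + 22, n, 2 * u + 35, 2 * u + 41}, ?_, ?_⟩
  · repeat rw [Finset.card_insert_of_notMem (by simp <;> omega)]
    simp
  · have hv : 1 < u + 19 := by omega
    intro x hx
    simp only [Finset.coe_insert, Finset.coe_singleton, Set.mem_insert_iff,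
      Set.mem_singleton_iff] at hx
    rcases hx with rfl | rfl | rfl | rfl | rfl
    · exact ⟨add_one_mem_diffValues_X_pow_six hφ hS hω₁,
        notMem_closure_six_nine_of_mod_three hv h3 (.inl rfl) (by omega) (by omega)⟩
    · exact ⟨add_one_mem_diffValues_X_pow_six hφ hS (order_polyDiff_X_pow_six_X_zero_mul hω₁),
        notMem_closure_six_nine_of_mod_three hv h3 (.inl rfl) (by omega) (by omega)⟩
    · exact ⟨hn, notMem_closure_six_nine_of_mod_three hv h3 (.inr rfl) (by omega) (by omega)⟩
    · exact ⟨add_one_mem_diffValues_X_pow_six hφ hS hω₂,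
        notMem_closure_six_nine_of_mod_three hv h3 (.inr rfl) (by omega) (by omega)⟩
    · exact ⟨add_one_mem_diffValues_X_pow_six hφ hS (order_polyDiff_X_pow_six_X_zero_mul hω₂),
        notMem_closure_six_nine_of_mod_three hv h3 (.inr rfl) (by omega) (by omega)⟩
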